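/- Let A be a bounded normal operator on a complex Hilbert space H, let α ∈ ρ(A) ∩ ℝ, and let L ⊆ H be a finite-dimensional subspace. Then (A − α)^{−1} is a bounded normal operator, (A − α)L is a subspace with dim((A − α)L) = dim(L), α ∉ Spec₂(A, L), and Spec₂((A − α)^{−1}, (A − α)L) = {(z − α)^{−1} : z ∈ Spec₂(A, L)}. -/

import Mathlib

/-!
Put `T = A - α`. Since `α ∉ σ(A)`, `T` is invertible, so it maps `L` isomorphically onto `TL`,
and for a real `z` the condition `z ∈ Spec₂(B, L)` with `ψ = φ` reads `‖(B - z)φ‖² = 0`, which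
excludes `α` from `Spec₂(A, L)` and `0` from `Spec₂(T⁻¹, TL)`. For `w ≠ 0` the identity
`(T⁻¹ - w) T = -w (T - w⁻¹)` makes the inner products defining `w ∈ Spec₂(T⁻¹, TL)` nonzero
multiples of those defining `w⁻¹ ∈ Spec₂(T, L)`, and since `α` is real,
`Spec₂(T, L) = Spec₂(A, L) - α`.
-/

open scoped InnerProductSpace ComplexConjugate Classical
open Complex ContinuousLinearMap

noncomputable section

variable {H : Type*} [NormedAddCommGroup H] [InnerProductSpace ℂ H] [CompleteSpace H]

def Spec2 (B : H →L[ℂ] H) (L : Submodule ℂ H) : Set ℂ :=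
  {z | ∃ φ ∈ L, φ ≠ 0 ∧ ∀ ψ ∈ L, ⟪(B - z • 1) φ, (B - (conj z) • 1) ψ⟫_ℂ = 0}

theorem isUnit_sub_smul_one_of_notMem_spectrum {R A : Type*} [CommRing R] [Ring A] [Algebra R A]
    {r : R} {a : A} (h : r ∉ spectrum R a) : IsUnit (a - r • 1) := by
  simpa [Algebra.algebraMap_eq_smul_one] using (spectrum.notMem_iff.mp h).neg

instance IsStarNormal.ringInverse {R : Type*} [Semiring R] [StarRing R] {a : R}
    [IsStarNormal a] : IsStarNormal (Ring.inverse a) := by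
  by_cases ha : IsUnit a
  · obtain ⟨u, rfl⟩ := ha
    rw [Ring.inverse_unit]
    infer_instance
  · rw [Ring.inverse_non_unit a ha]
    infer_instance

instance IsStarNormal.sub_smul_one {R A : Type*} [CommSemiring R] [StarRing R] [Ring A] [StarRing A]
    [Algebra R A] [StarModule R A] {a : A} [IsStarNormal a] (c : R) :
    IsStarNormal (a - c • 1) := by
  refine Commute.isStarNormal_sub ?_
  rw [star_smul, star_one]
  exact (Commute.one_right a).smul_right _

omit [CompleteSpace H] in
theorem notMem_spec2_of_injective (B : H →L[ℂ] H) (L : Submodule ℂ H) {z : ℂ} (hz : conj z = z)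
    (h : Function.Injective (B - z • 1 : H →L[ℂ] H)) : z ∉ Spec2 B L := by
  rintro ⟨φ, hφL, hφ0, hφ⟩
  have hself := hφ φ hφL
  rw [hz, inner_self_eq_zero] at hself
  exact hφ0 (h (hself.trans (map_zero _).symm))

omit [CompleteSpace H] in
theorem spec2_sub_ofReal_smul_one (B : H →L[ℂ] H) (L : Submodule ℂ H) (c : ℝ) :
    Spec2 (B - (c : ℂ) • 1) L = (· - (c : ℂ)) '' Spec2 B L := by
  rw [Set.image_eq_preimage_of_inverse (g := (· + (c : ℂ))) (fun z => by simp) (fun z => by simp)]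
  ext w
  have hshift : ∀ v : ℂ, B - (c : ℂ) • 1 - v • 1 = B - (v + c) • 1 := fun v => by
    rw [add_smul]; abel
  simp only [Spec2, Set.mem_preimage, Set.mem_ofPred_eq, hshift, map_add, conj_ofReal]

theorem Ring.inverse_sub_smul_one_mul {𝕜 A : Type*} [Field 𝕜] [Ring A] [Algebra 𝕜 A] {T : A}
    (hT : IsUnit T) {w : 𝕜} (hw : w ≠ 0) :
    (Ring.inverse T - w • 1) * T = -w • (T - w⁻¹ • 1) := by
  rw [sub_mul, Ring.inverse_mul_cancel T hT, smul_sub, smul_smul, neg_mul, mul_inv_cancel₀ hw,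
    smul_one_mul]
  module

theorem spec2_ringInverse_map (T : H →L[ℂ] H) (hT : IsUnit T) (L : Submodule ℂ H) :
    Spec2 (Ring.inverse T) (L.map (T : H →ₗ[ℂ] H)) = (·⁻¹) '' Spec2 T L := by
  have hTinj := (isUnit_iff_bijective.mp hT).injective
  rw [Set.image_eq_preimage_of_inverse inv_inv inv_inv]
  ext w
  -- `0⁻¹ = 0`, so `w = 0` is not covered by the identity below and is excluded on both sides.
  rcases eq_or_ne w 0 with rfl | hw
  · have hinvinj := (isUnit_iff_bijective.mp hT.ringInverse).injective
    refine iff_of_false ?_ ?_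
    · exact notMem_spec2_of_injective _ _ (map_zero _) (by simpa using hinvinj)
    · exact notMem_spec2_of_injective _ _ (by simp) (by simpa using hTinj)
  have hwc : conj w ≠ 0 := (map_ne_zero _).mpr hw
  have key : ∀ φ ψ, ⟪(Ring.inverse T - w • 1) (T φ), (Ring.inverse T - conj w • 1) (T ψ)⟫_ℂ =
      conj w ^ 2 * ⟪(T - w⁻¹ • 1) φ, (T - conj w⁻¹ • 1) ψ⟫_ℂ := fun φ ψ => by
    rw [← mul_apply_eq_comp, ← mul_apply_eq_comp, Ring.inverse_sub_smul_one_mul hT hw,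
      Ring.inverse_sub_smul_one_mul hT hwc, smul_apply, smul_apply, inner_smul_left,
      inner_smul_right, map_neg, map_inv₀]
    ring
  simp only [Spec2, Set.mem_preimage, Set.mem_ofPred_eq, Submodule.mem_map, coe_coe,
    exists_exists_and_eq_and, forall_exists_index, and_imp, forall_apply_eq_imp_iff₂, key,
    hTinj.ne_iff' (map_zero T), mul_eq_zero, pow_eq_zero_iff two_ne_zero, hwc, false_or]

theorem stmt19_general (A : H →L[ℂ] H) (hA : IsStarNormal A) (α : ℝ)
    (hα : (α : ℂ) ∉ spectrum ℂ A)
    (L : Submodule ℂ H) :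
    IsStarNormal (Ring.inverse (A - (α : ℂ) • 1)) ∧
    Module.finrank ℂ ↥(Submodule.map ((A - (α : ℂ) • 1 : H →L[ℂ] H) : H →ₗ[ℂ] H) L) = Module.finrank ℂ ↥L ∧
    (α : ℂ) ∉ Spec2 A L ∧
    Spec2 (Ring.inverse (A - (α : ℂ) • 1)) (Submodule.map ((A - (α : ℂ) • 1 : H →L[ℂ] H) : H →ₗ[ℂ] H) L) =
      (fun z : ℂ => (z - (α : ℂ))⁻¹) '' Spec2 A L := by
  have hT := isUnit_sub_smul_one_of_notMem_spectrum hα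
  have hTinj : Function.Injective (A - (α : ℂ) • 1 : H →L[ℂ] H) :=
    (isUnit_iff_bijective.mp hT).injective
  refine ⟨inferInstance, ?_, notMem_spec2_of_injective A L (conj_ofReal α) hTinj, ?_⟩
  · exact (Submodule.equivMapOfInjective _ hTinj L).finrank_eq.symm
  · rw [spec2_ringInverse_map _ hT, spec2_sub_ofReal_smul_one, Set.image_image]

/-- Section 6: for `α ∈ ρ(A) ∩ ℝ`, the operator `(A − α)⁻¹` is a bounded normal operator,
`(A − α)L` has the same dimension as `L`, `α ∉ Spec₂(A, L)`, and
`Spec₂((A − α)⁻¹, (A − α)L) = {(z − α)⁻¹ : z ∈ Spec₂(A, L)}`. -/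
theorem stmt19 (A : H →L[ℂ] H) (hA : IsStarNormal A) (α : ℝ)
    (hα : (α : ℂ) ∉ spectrum ℂ A)
    (L : Submodule ℂ H) [FiniteDimensional ℂ ↥L] :
    IsStarNormal (Ring.inverse (A - (α : ℂ) • 1)) ∧
    Module.finrank ℂ ↥(Submodule.map ((A - (α : ℂ) • 1 : H →L[ℂ] H) : H →ₗ[ℂ] H) L) = Module.finrank ℂ ↥L ∧
    (α : ℂ) ∉ Spec2 A L ∧
    Spec2 (Ring.inverse (A - (α : ℂ) • 1)) (Submodule.map ((A - (α : ℂ) • 1 : H →L[ℂ] H) : H →ₗ[ℂ] H) L) =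
      (fun z : ℂ => (z - (α : ℂ))⁻¹) '' Spec2 A L :=
  stmt19_general A hA α hα L

end
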